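/- arXiv:2410.16957 — 2 statements merged into one kernel-verified Lean document; each statement's English description precedes it below -/
import Mathlib

section
/- Let u ∈ C¹(B_1) and let α : B_1 → (0,1) be uniformly continuous with modulus of continuity γ_α satisfying lim as t→0⁺ of ln(t)·γ_α(t) = 0. Then [u]_{C^{1,α(·)}(B_1)} < ∞ (i.e. u ∈ C^{1,α(·)}(B_1)) if and only if there exists a constant C > 0, independent of x, such that for every x ∈ B_1 there is an affine function ℓ_x with sup over B_r(x) ∩ B_1 of |u − ℓ_x| ≤ C·r^{1+α(x)} for every r > 0. -/
/-!
Forward direction: by the mean value inequality, the Hölder bound on `Du` at the base point `x`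
gives `|u y - u x - Du(x)(y - x)| ≤ C ‖y - x‖ ^ (1 + α x)`, so the tangent affine map works.

Reverse direction: approximation of order `1 + α x > 1` forces `Du(x)` to be the slope of `ℓ_x`.
For `ρ = ‖x - y‖`, the closed ball of radius `ρ / 2` around `(1 - ρ / 2) • x` lies in
`B₁ ∩ B_{2ρ}(x) ∩ B_{2ρ}(y)`, where `ℓ_x` and `ℓ_y` both stay within `O(ρ ^ (1 + α))` of `u`;
a linear functional bounded by `M` on a ball of radius `ρ / 2` has norm at most `2M / ρ`, so
`‖Du(x) - Du(y)‖ = O(ρ ^ α(x) + ρ ^ α(y))`. Finally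
`ρ ^ (α y - α x) ≤ exp (|log ρ| γ_α(ρ))`, which is bounded because `log t · γ_α(t) → 0`.
-/

open Metric Real Filter Set
open scoped RealInnerProductSpace

noncomputable section

/-- Modulus of continuity of a real-valued function h on a set s. -/
def modulusOn {d : ℕ} (s : Set (EuclideanSpace ℝ (Fin d)))
    (h : EuclideanSpace ℝ (Fin d) → ℝ) (t : ℝ) : ℝ :=
  sSup {c | ∃ x ∈ s, ∃ y ∈ s, dist x y ≤ t ∧ c = |h x - h y|}

open Asymptotics Topology

section NormedSpace

variable {E : Type*} [NormedAddCommGroup E]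

theorem isLittleO_norm_sub_rpow_one_add {a : ℝ} (ha : 0 < a) (x : E) :
    (fun y => ‖y - x‖ ^ (1 + a)) =o[𝓝 x] fun y => y - x := by
  have hlim : Tendsto (fun y => ‖y - x‖ ^ a) (𝓝 x) (𝓝 0) := by
    have := (continuousAt_rpow_const 0 a (Or.inr ha.le)).tendsto.comp (tendsto_norm_sub_self x)
    rwa [zero_rpow ha.ne'] at this
  rw [← isLittleO_norm_right]
  refine (((isLittleO_one_iff ℝ).2 hlim).mul_isBigO (isBigO_refl (fun y => ‖y - x‖) _)).congr'
    ?_ (by simp)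
  filter_upwards with y
  rw [rpow_one_add' (norm_nonneg _) (by linarith), mul_comm]

variable [NormedSpace ℝ E]

theorem closedBall_one_sub_smul_subset {x : E} (hx : x ∈ ball (0 : E) 1) {t : ℝ}
    (ht₀ : 0 < t) (ht₁ : t < 1) : closedBall ((1 - t) • x) t ⊆ ball x (2 * t) ∩ ball 0 1 := by
  rw [mem_ball_zero_iff] at hx
  intro z hz
  rw [mem_closedBall_iff_norm] at hz
  have hw : ‖(1 - t) • x‖ = (1 - t) * ‖x‖ := by
    rw [norm_smul, Real.norm_of_nonneg (by linarith)]
  have hwx : ‖(1 - t) • x - x‖ = t * ‖x‖ := by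
    rw [show (1 - t) • x - x = (-t) • x by module, norm_smul, norm_neg, Real.norm_of_nonneg ht₀.le]
  constructor
  · rw [mem_ball_iff_norm]
    calc ‖z - x‖ ≤ ‖z - (1 - t) • x‖ + ‖(1 - t) • x - x‖ := norm_sub_le_norm_sub_add_norm_sub _ _ _
      _ < 2 * t := by nlinarith
  · rw [mem_ball_zero_iff]
    calc ‖z‖ ≤ ‖z - (1 - t) • x‖ + ‖(1 - t) • x‖ := norm_le_norm_sub_add _ _
      _ < 1 := by nlinarith

theorem norm_sub_le_of_abs_sub_affine_le {u : E → ℝ} {b₁ b₂ M₁ M₂ t : ℝ} {L₁ L₂ : E →L[ℝ] ℝ}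
    {w : E} (ht : 0 < t) (h₁ : ∀ z ∈ closedBall w t, |u z - (b₁ + L₁ z)| ≤ M₁)
    (h₂ : ∀ z ∈ closedBall w t, |u z - (b₂ + L₂ z)| ≤ M₂) :
    ‖L₁ - L₂‖ ≤ 2 * (M₁ + M₂) / t := by
  have hdiff : ∀ z ∈ closedBall w t, |(b₁ + L₁ z) - (b₂ + L₂ z)| ≤ M₁ + M₂ := fun z hz =>
    calc |(b₁ + L₁ z) - (b₂ + L₂ z)| = |(u z - (b₂ + L₂ z)) - (u z - (b₁ + L₁ z))| := by ring_nf
      _ ≤ |u z - (b₂ + L₂ z)| + |u z - (b₁ + L₁ z)| := abs_sub _ _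
      _ ≤ M₁ + M₂ := by linarith [h₁ z hz, h₂ z hz]
  refine ContinuousLinearMap.opNorm_bound_of_ball_bound ht _ _ fun v hv => ?_
  have hwv : w + v ∈ closedBall w t := by simpa [mem_closedBall_iff_norm] using hv
  have hw : w ∈ closedBall w t := mem_closedBall_self ht.le
  calc ‖(L₁ - L₂) v‖
      = |((b₁ + L₁ (w + v)) - (b₂ + L₂ (w + v))) - ((b₁ + L₁ w) - (b₂ + L₂ w))| := by
        simp only [sub_apply, map_add, Real.norm_eq_abs]; ring_nf
    _ ≤ (M₁ + M₂) + (M₁ + M₂) := (abs_sub _ _).trans (add_le_add (hdiff _ hwv) (hdiff _ hw))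
    _ = 2 * (M₁ + M₂) := by ring

theorem hasFDerivAt_of_abs_sub_affine_le {u : E → ℝ} {s : Set E} {x : E} {b C a : ℝ}
    {L : E →L[ℝ] ℝ} (hs : s ∈ 𝓝 x) (ha : 0 < a)
    (h : ∀ r > 0, ∀ y ∈ ball x r ∩ s, |u y - (b + L y)| ≤ C * r ^ (1 + a)) :
    HasFDerivAt u L x := by
  rw [hasFDerivAt_iff_isLittleO]
  refine IsBigO.trans_isLittleO ?_ (isLittleO_norm_sub_rpow_one_add ha x)
  refine IsBigO.of_bound (2 * C * 2 ^ (1 + a)) ?_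
  filter_upwards [hs] with y hy
  rcases eq_or_ne y x with rfl | hyx
  · simp [zero_rpow (by linarith : 1 + a ≠ 0)]
  have hr : 0 < 2 * ‖y - x‖ := by simpa [sub_eq_zero] using hyx
  have hy' : y ∈ ball x (2 * ‖y - x‖) := by rw [mem_ball_iff_norm]; linarith
  calc ‖u y - u x - L (y - x)‖
      = |(u y - (b + L y)) - (u x - (b + L x))| := by rw [map_sub, Real.norm_eq_abs]; ring_nf
    _ ≤ C * (2 * ‖y - x‖) ^ (1 + a) + C * (2 * ‖y - x‖) ^ (1 + a) :=
        (abs_sub _ _).trans (add_le_add (h _ hr y ⟨hy', hy⟩)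
          (h _ hr x ⟨mem_ball_self hr, mem_of_mem_nhds hs⟩))
    _ = 2 * C * 2 ^ (1 + a) * ‖‖y - x‖ ^ (1 + a)‖ := by
        rw [mul_rpow zero_le_two (norm_nonneg _), Real.norm_of_nonneg (by positivity)]; ring

theorem abs_sub_sub_fderiv_le_of_holder {u : E → ℝ} {s : Set E} (hs : Convex ℝ s)
    (hso : IsOpen s) (hu : DifferentiableOn ℝ u s) {x y : E} (hx : x ∈ s) (hy : y ∈ s) {C a : ℝ}
    (hC : 0 ≤ C) (ha : 0 ≤ a)
    (h : ∀ z ∈ s, z ≠ x → ‖fderiv ℝ u x - fderiv ℝ u z‖ ≤ C * ‖x - z‖ ^ a) :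
    |u y - u x - fderiv ℝ u x (y - x)| ≤ C * ‖y - x‖ ^ (1 + a) := by
  have hbound : ∀ z ∈ s ∩ closedBall x ‖y - x‖,
      ‖fderiv ℝ u z - fderiv ℝ u x‖ ≤ C * ‖y - x‖ ^ a := by
    rintro z ⟨hz, hzx⟩
    rcases eq_or_ne z x with rfl | hne
    · simp only [sub_self, norm_zero]; positivity
    rw [norm_sub_rev]
    exact (h z hz hne).trans (by gcongr; rw [← dist_eq_norm]; exact mem_closedBall'.1 hzx)
  have := (hs.inter (convex_closedBall x ‖y - x‖)).norm_image_sub_le_of_norm_fderiv_le'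
    (fun z hz => hu.differentiableAt (hso.mem_nhds hz.1)) hbound
    ⟨hx, mem_closedBall_self (norm_nonneg _)⟩ ⟨hy, mem_closedBall_iff_norm.2 le_rfl⟩
  rw [← Real.norm_eq_abs, rpow_one_add' (norm_nonneg _) (by linarith)]
  exact this.trans_eq (by ring)

theorem norm_sub_le_of_abs_sub_affine_le_rpow {u : E → ℝ} {x y : E} (hx : x ∈ ball (0 : E) 1)
    (hy : y ∈ ball (0 : E) 1) (hxy : x ≠ y) {b₁ b₂ a₁ a₂ C : ℝ} {L₁ L₂ : E →L[ℝ] ℝ}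
    (hC : 0 ≤ C) (ha₁ : a₁ ≤ 1) (ha₂ : a₂ ≤ 1)
    (h₁ : ∀ r > 0, ∀ z ∈ ball x r ∩ ball 0 1, |u z - (b₁ + L₁ z)| ≤ C * r ^ (1 + a₁))
    (h₂ : ∀ r > 0, ∀ z ∈ ball y r ∩ ball 0 1, |u z - (b₂ + L₂ z)| ≤ C * r ^ (1 + a₂)) :
    ‖L₁ - L₂‖ ≤ 16 * C * (‖x - y‖ ^ a₁ + ‖x - y‖ ^ a₂) := by
  set ρ := ‖x - y‖
  have hρ : 0 < ρ := norm_pos_iff.2 (sub_ne_zero.2 hxy)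
  have hρ₂ : ρ < 2 := by
    rw [mem_ball_zero_iff] at hx hy
    linarith [norm_sub_le x y]
  have hsub := closedBall_one_sub_smul_subset hx (half_pos hρ) (by linarith)
  have hmem : ∀ z ∈ closedBall ((1 - ρ / 2) • x) (ρ / 2),
      z ∈ ball x (2 * ρ) ∩ ball 0 1 ∧ z ∈ ball y (2 * ρ) ∩ ball 0 1 := by
    intro z hz
    obtain ⟨hzx, hz⟩ := hsub hz
    rw [mem_ball_iff_norm] at hzx
    refine ⟨⟨mem_ball_iff_norm.2 (by linarith), hz⟩, ⟨mem_ball_iff_norm.2 ?_, hz⟩⟩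
    linarith [norm_sub_le_norm_sub_add_norm_sub z x y]
  have hpow : ∀ a : ℝ, a ≤ 1 → (2 * ρ) ^ (1 + a) ≤ 4 * ρ * ρ ^ a := fun a ha => by
    rw [mul_rpow zero_le_two hρ.le, rpow_add hρ, rpow_one, ← mul_assoc]
    gcongr
    calc (2 : ℝ) ^ (1 + a) ≤ 2 ^ (2 : ℝ) := rpow_le_rpow_of_exponent_le one_le_two (by linarith)
      _ = 4 := by norm_num
  calc ‖L₁ - L₂‖ ≤ 2 * (C * (2 * ρ) ^ (1 + a₁) + C * (2 * ρ) ^ (1 + a₂)) / (ρ / 2) :=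
        norm_sub_le_of_abs_sub_affine_le (half_pos hρ)
          (fun z hz => h₁ _ (by positivity) z (hmem z hz).1)
          (fun z hz => h₂ _ (by positivity) z (hmem z hz).2)
    _ ≤ 2 * (C * (4 * ρ * ρ ^ a₁) + C * (4 * ρ * ρ ^ a₂)) / (ρ / 2) := by
        gcongr
        exacts [hpow a₁ ha₁, hpow a₂ ha₂]
    _ = 16 * C * (ρ ^ a₁ + ρ ^ a₂) := by field_simp; ring

end NormedSpace

theorem rpow_le_rpow_mul_exp {ρ : ℝ} (hρ : 0 < ρ) (a b : ℝ) :
    ρ ^ b ≤ ρ ^ a * exp (|log ρ| * |b - a|) := by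
  rw [rpow_def_of_pos hρ, rpow_def_of_pos hρ, ← exp_add, exp_le_exp, ← abs_mul]
  linarith [le_abs_self (log ρ * (b - a))]

theorem exists_abs_log_mul_le_of_tendsto {γ : ℝ → ℝ}
    (hγ : Tendsto (fun t => log t * γ t) (𝓝[>] 0) (𝓝 0)) (hγ₁ : ∀ t, γ t ≤ 1) (R : ℝ) :
    ∃ K, ∀ t ∈ Ioc 0 R, |log t| * γ t ≤ K := by
  obtain ⟨ε, hε, hsmall⟩ := (nhdsGT_basis (0 : ℝ)).eventually_iff.1
    (hγ.abs.eventually (gt_mem_nhds (by norm_num : |(0 : ℝ)| < 1)))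
  refine ⟨max 1 (max (-log ε) (log R)), fun t ⟨ht₀, htR⟩ => ?_⟩
  rcases lt_or_ge t ε with htε | htε
  · calc |log t| * γ t ≤ |log t| * |γ t| := by gcongr; exact le_abs_self _
      _ = |log t * γ t| := (abs_mul _ _).symm
      _ ≤ _ := (hsmall ⟨ht₀, htε⟩).le.trans (le_max_left _ _)
  · calc |log t| * γ t ≤ |log t| := mul_le_of_le_one_right (abs_nonneg _) (hγ₁ t)
      _ ≤ max (-log ε) (log R) := abs_le.2
          ⟨by linarith [log_le_log hε htε, le_max_left (-log ε) (log R)],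
            (log_le_log ht₀ htR).trans (le_max_right _ _)⟩
      _ ≤ _ := le_max_right _ _

section ModulusOn

variable {d : ℕ} {s : Set (EuclideanSpace ℝ (Fin d))} {α : EuclideanSpace ℝ (Fin d) → ℝ}

theorem modulusOn_le_one (hα : MapsTo α s (Icc 0 1)) (t : ℝ) : modulusOn s α t ≤ 1 := by
  refine Real.sSup_le ?_ zero_le_one
  rintro _ ⟨x, hx, y, hy, -, rfl⟩
  exact (Real.dist_eq _ _).symm.trans_le (Real.dist_le_of_mem_Icc_01 (hα hx) (hα hy))

theorem abs_sub_le_modulusOn (hα : MapsTo α s (Icc 0 1)) {x y : EuclideanSpace ℝ (Fin d)}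
    (hx : x ∈ s) (hy : y ∈ s) : |α x - α y| ≤ modulusOn s α (dist x y) := by
  refine le_csSup ⟨1, ?_⟩ ⟨x, hx, y, hy, le_rfl, rfl⟩
  rintro _ ⟨x, hx, y, hy, -, rfl⟩
  exact (Real.dist_eq _ _).symm.trans_le (Real.dist_le_of_mem_Icc_01 (hα hx) (hα hy))

theorem exists_norm_sub_rpow_le_mul_rpow (hs : Bornology.IsBounded s) (hα : MapsTo α s (Icc 0 1))
    (hmod : Tendsto (fun t => log t * modulusOn s α t) (𝓝[>] 0) (𝓝 0)) :
    ∃ K, ∀ x ∈ s, ∀ y ∈ s, x ≠ y → ‖x - y‖ ^ α y ≤ K * ‖x - y‖ ^ α x := by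
  obtain ⟨R, hR⟩ := isBounded_iff.1 hs
  obtain ⟨K, hK⟩ := exists_abs_log_mul_le_of_tendsto hmod (modulusOn_le_one hα) R
  refine ⟨exp K, fun x hx y hy hxy => ?_⟩
  have hρ : 0 < ‖x - y‖ := norm_pos_iff.2 (sub_ne_zero.2 hxy)
  have hρR : ‖x - y‖ ∈ Ioc 0 R := ⟨hρ, dist_eq_norm x y ▸ hR hx hy⟩
  calc ‖x - y‖ ^ α y ≤ ‖x - y‖ ^ α x * exp (|log ‖x - y‖| * |α y - α x|) :=
        rpow_le_rpow_mul_exp hρ _ _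
    _ ≤ ‖x - y‖ ^ α x * exp (|log ‖x - y‖| * modulusOn s α ‖x - y‖) := by
        gcongr
        rw [abs_sub_comm, ← dist_eq_norm]
        exact abs_sub_le_modulusOn hα hx hy
    _ ≤ exp K * ‖x - y‖ ^ α x := by rw [mul_comm]; gcongr; exact hK _ hρR

end ModulusOn

theorem variable_holder_characterization_general
    (d : ℕ) (u : EuclideanSpace ℝ (Fin d) → ℝ)
    (α : EuclideanSpace ℝ (Fin d) → ℝ)
    (hu : ContDiffOn ℝ 1 u (ball (0 : EuclideanSpace ℝ (Fin d)) 1))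
    (hα : ∀ x ∈ ball (0 : EuclideanSpace ℝ (Fin d)) 1, 0 < α x ∧ α x < 1)
    (hmod : Tendsto
      (fun t : ℝ => Real.log t * modulusOn (ball (0 : EuclideanSpace ℝ (Fin d)) 1) α t)
      (nhdsWithin 0 (Set.Ioi 0)) (nhds 0)) :
    (∃ C : ℝ, ∀ x ∈ ball (0 : EuclideanSpace ℝ (Fin d)) 1,
        ∀ y ∈ ball (0 : EuclideanSpace ℝ (Fin d)) 1, x ≠ y →
        ‖fderiv ℝ u x - fderiv ℝ u y‖ ≤ C * ‖x - y‖ ^ (α x)) ↔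
    (∃ C > (0 : ℝ), ∀ x ∈ ball (0 : EuclideanSpace ℝ (Fin d)) 1,
        ∃ (b : ℝ) (A : EuclideanSpace ℝ (Fin d)), ∀ r > (0 : ℝ),
          ∀ y ∈ ball x r ∩ ball (0 : EuclideanSpace ℝ (Fin d)) 1,
            |u y - (b + ⟪A, y⟫)| ≤ C * r ^ ((1 : ℝ) + α x)) := by
  constructor
  · rintro ⟨C, hC⟩
    refine ⟨max C 1, by positivity, fun x hx => ⟨u x - fderiv ℝ u x x,
      (InnerProductSpace.toDual ℝ _).symm (fderiv ℝ u x), fun r hr y ⟨hyx, hy⟩ => ?_⟩⟩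
    rw [InnerProductSpace.toDual_symm_apply]
    rw [mem_ball_iff_norm] at hyx
    calc |u y - (u x - fderiv ℝ u x x + fderiv ℝ u x y)|
        = |u y - u x - fderiv ℝ u x (y - x)| := by rw [map_sub]; ring_nf
      _ ≤ max C 1 * ‖y - x‖ ^ (1 + α x) :=
          abs_sub_sub_fderiv_le_of_holder (convex_ball 0 1) isOpen_ball
            (hu.differentiableOn one_ne_zero) hx hy (by positivity) (hα x hx).1.le
            fun z hz hzx => (hC x hx z hz hzx.symm).trans (by gcongr; exact le_max_left _ _)
      _ ≤ max C 1 * r ^ (1 + α x) := by gcongr; linarith [(hα x hx).1]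
  · rintro ⟨C, hC, happrox⟩
    choose! b A hA using happrox
    obtain ⟨K, hK⟩ := exists_norm_sub_rpow_le_mul_rpow isBounded_ball
      (fun x hx => ⟨(hα x hx).1.le, (hα x hx).2.le⟩) hmod
    refine ⟨16 * C * (1 + K), fun x hx y hy hxy => ?_⟩
    have hfderiv : ∀ z ∈ ball (0 : EuclideanSpace ℝ (Fin d)) 1,
        fderiv ℝ u z = InnerProductSpace.toDual ℝ _ (A z) := fun z hz =>
      (hasFDerivAt_of_abs_sub_affine_le (isOpen_ball.mem_nhds hz) (hα z hz).1 (hA z hz)).fderiv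
    rw [hfderiv x hx, hfderiv y hy]
    calc _ ≤ 16 * C * (‖x - y‖ ^ α x + ‖x - y‖ ^ α y) :=
          norm_sub_le_of_abs_sub_affine_le_rpow hx hy hxy hC.le (hα x hx).2.le (hα y hy).2.le
            (hA x hx) (hA y hy)
      _ ≤ 16 * C * (‖x - y‖ ^ α x + K * ‖x - y‖ ^ α x) := by gcongr; exact hK x hx y hy hxy
      _ = 16 * C * (1 + K) * ‖x - y‖ ^ α x := by ring

/-- characterization of the variable-exponent Hölder space C^{1,α(·)}(B₁):
    finiteness of the seminorm sup_{x≠y} |Du(x)−Du(y)|/|x−y|^{α(x)} is equivalent to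
    uniform first-order affine approximation at rate r^{1+α(x)} at every point. -/
theorem variable_holder_characterization
    (d : ℕ) (u : EuclideanSpace ℝ (Fin d) → ℝ)
    (α : EuclideanSpace ℝ (Fin d) → ℝ)
    (hu : ContDiffOn ℝ 1 u (ball (0 : EuclideanSpace ℝ (Fin d)) 1))
    (hα : ∀ x ∈ ball (0 : EuclideanSpace ℝ (Fin d)) 1, 0 < α x ∧ α x < 1)
    (hαuc : UniformContinuousOn α (ball (0 : EuclideanSpace ℝ (Fin d)) 1))
    (hmod : Tendsto
      (fun t : ℝ => Real.log t * modulusOn (ball (0 : EuclideanSpace ℝ (Fin d)) 1) α t)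
      (nhdsWithin 0 (Set.Ioi 0)) (nhds 0)) :
    (∃ C : ℝ, ∀ x ∈ ball (0 : EuclideanSpace ℝ (Fin d)) 1,
        ∀ y ∈ ball (0 : EuclideanSpace ℝ (Fin d)) 1, x ≠ y →
        ‖fderiv ℝ u x - fderiv ℝ u y‖ ≤ C * ‖x - y‖ ^ (α x)) ↔
    (∃ C > (0 : ℝ), ∀ x ∈ ball (0 : EuclideanSpace ℝ (Fin d)) 1,
        ∃ (b : ℝ) (A : EuclideanSpace ℝ (Fin d)), ∀ r > (0 : ℝ),
          ∀ y ∈ ball x r ∩ ball (0 : EuclideanSpace ℝ (Fin d)) 1,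
            |u y - (b + ⟪A, y⟫)| ≤ C * r ^ ((1 : ℝ) + α x)) :=
  variable_holder_characterization_general d u α hu hα hmod
end
end

section
/- Let F^± be (λ,Λ)-uniformly elliptic, let a ∈ (0,1) be constant, let f^± be bounded and uniformly continuous on B_1^±, let g be bounded and uniformly continuous on T, and let u be a bounded viscosity subsolution of the flat transmission problem ω(x)F^±(D²u) = f^± in B_1^±, u_{x_d}⁺ − u_{x_d}⁻ = g on T. Fix 0 < ρ < 1 with closure(B_ρ) ⊂ B_1. Then for every sufficiently small ε > 0, the upper ε-envelope u^ε is a viscosity subsolution of ω(x)F^±(D²u^ε) = f^± − γ_{f^±}(r_ε) in B_r^± and (u^ε)_{x_d}⁺ − (u^ε)_{x_d}⁻ = g − γ_g(r_ε) on B_r ∩ {x_d = 0}, for every r ≤ ρ − r_ε, where r_ε = (2ε‖u‖_{L^∞(B_1)})^{1/2} and γ_h(t) = sup over |x−y| ≤ t of |h(x)−h(y)| is the modulus of continuity of h. -/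
/-! The supremum defining `u^ε(y)` is attained (u is upper semicontinuous, the section of
`closure(B_ρ)` through `y` is compact) at a horizontal translate `y + v`, and comparing with the
competitor `y` itself gives `|v|² ≤ 2ε‖u‖_∞`, i.e. `|v| ≤ r_ε`. Since `u(x) ≤ u^ε(x - v) + |v|²/ε`
with equality at `y + v`, a test function touching `u^ε` from above at `y` becomes, after
translation by `v` and addition of `|v|²/ε`, a test function touching `u` from above at `y + v`,
with the same Hessian and the same one-sided derivatives. A horizontal translation preserves the
weight `|x_d|^a` and the two sides of `{x_d = 0}`, so only the data move, by at most their
oscillation at scale `r_ε`. -/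

open Metric MeasureTheory Real Filter Set
open scoped RealInnerProductSpace Classical

noncomputable section

/-- ℝ^{n+1}, the ambient Euclidean space (d = n+1 ≥ 2 when 1 ≤ n). -/
abbrev E (n : ℕ) : Type := EuclideanSpace ℝ (Fin (n+1))

/-- ℝ^n, the horizontal Euclidean space. -/
abbrev E' (n : ℕ) : Type := EuclideanSpace ℝ (Fin n)

variable {n : ℕ}

/-- The first n coordinates x' of a point x = (x', x_d). -/
def hd (x : E n) : E' n := WithLp.toLp 2 (fun i : Fin n => x i.castSucc)

/-- The last coordinate x_d of a point x = (x', x_d). -/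
def lst (x : E n) : ℝ := x (Fin.last n)

/-- Assemble a point of ℝ^{n+1} from horizontal and vertical parts. -/
def put (v : E' n) (t : ℝ) : E n :=
  WithLp.toLp 2 (fun i : Fin (n+1) => (Fin.lastCases t (fun j => v j) i : ℝ))

/-- The vertical unit vector e_d. -/
def ed (n : ℕ) : E n := EuclideanSpace.single (Fin.last n) 1

/-- The Hessian matrix D²φ(x). -/
def hess (φ : E n → ℝ) (x : E n) : Matrix (Fin (n+1)) (Fin (n+1)) ℝ :=
  fun i j => iteratedFDeriv ℝ 2 φ x ![EuclideanSpace.single i 1, EuclideanSpace.single j 1]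

/-- Operator norm of a symmetric matrix (max |eigenvalue|). -/
def symNorm {m : ℕ} (M : Matrix (Fin m) (Fin m) ℝ) : ℝ :=
  if h : M.IsHermitian then ⨆ i, |h.eigenvalues i| else 0

/-- Pucci maximal operator M⁺: Λ·(sum of positive eigenvalues) + λ·(sum of negative ones). -/
def pucciSup {m : ℕ} (lam Lam : ℝ) (M : Matrix (Fin m) (Fin m) ℝ) : ℝ :=
  if h : M.IsHermitian then
    ∑ i, (Lam * max (h.eigenvalues i) 0 + lam * min (h.eigenvalues i) 0)
  else 0

/-- Pucci minimal operator M⁻: λ·(sum of positive eigenvalues) + Λ·(sum of negative ones). -/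
def pucciInf {m : ℕ} (lam Lam : ℝ) (M : Matrix (Fin m) (Fin m) ℝ) : ℝ :=
  if h : M.IsHermitian then
    ∑ i, (lam * max (h.eigenvalues i) 0 + Lam * min (h.eigenvalues i) 0)
  else 0

/-- (λ,Λ)-uniform ellipticity of an operator F on symmetric matrices. -/
def UniformlyElliptic {m : ℕ} (lam Lam : ℝ) (F : Matrix (Fin m) (Fin m) ℝ → ℝ) : Prop :=
  ∀ M N : Matrix (Fin m) (Fin m) ℝ, M.IsHermitian → N.PosSemidef →
    lam * symNorm N ≤ F (M + N) - F M ∧ F (M + N) - F M ≤ Lam * symNorm N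

/-- Ω⁺ = B₁ ∩ {x_d > Ψ(x')}. -/
def OmP (Ψ : E' n → ℝ) : Set (E n) := {x | x ∈ ball (0 : E n) 1 ∧ Ψ (hd x) < lst x}

/-- Ω⁻ = B₁ ∩ {x_d < Ψ(x')}. -/
def OmM (Ψ : E' n → ℝ) : Set (E n) := {x | x ∈ ball (0 : E n) 1 ∧ lst x < Ψ (hd x)}

/-- Γ = B₁ ∩ {x_d = Ψ(x')}. -/
def Gam (Ψ : E' n → ℝ) : Set (E n) := {x | x ∈ ball (0 : E n) 1 ∧ lst x = Ψ (hd x)}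

/-- Unit normal to Γ pointing towards Ω⁺. -/
def nuv (Ψ : E' n → ℝ) (x : E n) : E n :=
  ((1 + ‖gradient Ψ (hd x)‖ ^ 2) ^ (-(1/2 : ℝ))) • put (-(gradient Ψ (hd x))) 1

/-- The degenerate weight ω(x) = |x_d − Ψ(x')|^{a(x)}. -/
def wgt (Ψ : E' n → ℝ) (a : E n → ℝ) (x : E n) : ℝ := |lst x - Ψ (hd x)| ^ (a x)

/-- φ touches u from above at x₀ within s (on a δ-neighborhood). -/
def TouchAbove (u φ : E n → ℝ) (s : Set (E n)) (x₀ : E n) (δ : ℝ) : Prop :=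
  φ x₀ = u x₀ ∧ ∀ x ∈ ball x₀ δ ∩ s, u x ≤ φ x

/-- φ touches u from below at x₀ within s (on a δ-neighborhood). -/
def TouchBelow (u φ : E n → ℝ) (s : Set (E n)) (x₀ : E n) (δ : ℝ) : Prop :=
  φ x₀ = u x₀ ∧ ∀ x ∈ ball x₀ δ ∩ s, φ x ≤ u x

/-- Interior viscosity subsolution of ω(x) F(D²u) = f on the open set Ω. -/
def SubIn (F : Matrix (Fin (n+1)) (Fin (n+1)) ℝ → ℝ) (ω f : E n → ℝ) (Ω : Set (E n))
    (u : E n → ℝ) : Prop :=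
  ∀ x₀ ∈ Ω, ∀ φ : E n → ℝ, ∀ δ > 0, ContDiffOn ℝ 2 φ (ball x₀ δ) →
    TouchAbove u φ Ω x₀ δ → f x₀ ≤ ω x₀ * F (hess φ x₀)

/-- Interior viscosity supersolution of ω(x) F(D²u) = f on the open set Ω. -/
def SupIn (F : Matrix (Fin (n+1)) (Fin (n+1)) ℝ → ℝ) (ω f : E n → ℝ) (Ω : Set (E n))
    (u : E n → ℝ) : Prop :=
  ∀ x₀ ∈ Ω, ∀ φ : E n → ℝ, ∀ δ > 0, ContDiffOn ℝ 2 φ (ball x₀ δ) →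
    TouchBelow u φ Ω x₀ δ → ω x₀ * F (hess φ x₀) ≤ f x₀

/-- A two-sided C¹ test pair (φ⁺, φ⁻), glued continuously along Γ, touching u from above. -/
def TransTestAbove (u φp φm : E n → ℝ) (Ωp Ωm Γs : Set (E n)) (x₀ : E n) (δ : ℝ) : Prop :=
  ContDiffOn ℝ 1 φp (ball x₀ δ) ∧ ContDiffOn ℝ 1 φm (ball x₀ δ) ∧
  (∀ x ∈ ball x₀ δ ∩ Γs, φp x = φm x) ∧ φp x₀ = u x₀ ∧
  (∀ x ∈ ball x₀ δ ∩ (Ωp ∪ Γs), u x ≤ φp x) ∧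
  (∀ x ∈ ball x₀ δ ∩ (Ωm ∪ Γs), u x ≤ φm x)

/-- A two-sided C¹ test pair touching u from below. -/
def TransTestBelow (u φp φm : E n → ℝ) (Ωp Ωm Γs : Set (E n)) (x₀ : E n) (δ : ℝ) : Prop :=
  ContDiffOn ℝ 1 φp (ball x₀ δ) ∧ ContDiffOn ℝ 1 φm (ball x₀ δ) ∧
  (∀ x ∈ ball x₀ δ ∩ Γs, φp x = φm x) ∧ φp x₀ = u x₀ ∧
  (∀ x ∈ ball x₀ δ ∩ (Ωp ∪ Γs), φp x ≤ u x) ∧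
  (∀ x ∈ ball x₀ δ ∩ (Ωm ∪ Γs), φm x ≤ u x)

/-- Viscosity transmission inequality u_ν⁺ − u_ν⁻ ≥ g on Γ (subsolution condition). -/
def TransSub (Ωp Ωm Γs : Set (E n)) (ν : E n → E n) (g u : E n → ℝ) : Prop :=
  ∀ x₀ ∈ Γs, ∀ φp φm : E n → ℝ, ∀ δ > 0, TransTestAbove u φp φm Ωp Ωm Γs x₀ δ →
    g x₀ ≤ fderiv ℝ φp x₀ (ν x₀) - fderiv ℝ φm x₀ (ν x₀)

/-- Viscosity transmission inequality u_ν⁺ − u_ν⁻ ≤ g on Γ (supersolution condition). -/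
def TransSup (Ωp Ωm Γs : Set (E n)) (ν : E n → E n) (g u : E n → ℝ) : Prop :=
  ∀ x₀ ∈ Γs, ∀ φp φm : E n → ℝ, ∀ δ > 0, TransTestBelow u φp φm Ωp Ωm Γs x₀ δ →
    fderiv ℝ φp x₀ (ν x₀) - fderiv ℝ φm x₀ (ν x₀) ≤ g x₀

/-- Viscosity solution of the curved transmission problem
    ω(x)F^±(D²u) = f^± in Ω^±, u_ν⁺ − u_ν⁻ = g on Γ. -/
def Sol (Ψ : E' n → ℝ) (a : E n → ℝ) (Fp Fm : Matrix (Fin (n+1)) (Fin (n+1)) ℝ → ℝ)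
    (fp fm g u : E n → ℝ) : Prop :=
  SubIn Fp (wgt Ψ a) fp (OmP Ψ) u ∧ SupIn Fp (wgt Ψ a) fp (OmP Ψ) u ∧
  SubIn Fm (wgt Ψ a) fm (OmM Ψ) u ∧ SupIn Fm (wgt Ψ a) fm (OmM Ψ) u ∧
  TransSub (OmP Ψ) (OmM Ψ) (Gam Ψ) (nuv Ψ) g u ∧
  TransSup (OmP Ψ) (OmM Ψ) (Gam Ψ) (nuv Ψ) g u

/-- Flat setting: B_r⁺ = B_r ∩ {x_d > 0}. -/
def BpR (n : ℕ) (r : ℝ) : Set (E n) := {x | x ∈ ball (0 : E n) r ∧ 0 < lst x}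

/-- Flat setting: B_r⁻ = B_r ∩ {x_d < 0}. -/
def BmR (n : ℕ) (r : ℝ) : Set (E n) := {x | x ∈ ball (0 : E n) r ∧ lst x < 0}

/-- Flat setting: T_r = B_r ∩ {x_d = 0}. -/
def TR (n : ℕ) (r : ℝ) : Set (E n) := {x | x ∈ ball (0 : E n) r ∧ lst x = 0}

/-- Flat weight ω(x) = |x_d|^a (constant exponent). -/
def wflat (n : ℕ) (a : ℝ) (x : E n) : ℝ := |lst x| ^ a

/-- Viscosity subsolution of the flat transmission problem on B_r. -/
def FlatSub (r a : ℝ) (Fp Fm : Matrix (Fin (n+1)) (Fin (n+1)) ℝ → ℝ)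
    (fp fm g u : E n → ℝ) : Prop :=
  SubIn Fp (wflat n a) fp (BpR n r) u ∧ SubIn Fm (wflat n a) fm (BmR n r) u ∧
  TransSub (BpR n r) (BmR n r) (TR n r) (fun _ => ed n) g u

/-- Viscosity supersolution of the flat transmission problem on B_r. -/
def FlatSup (r a : ℝ) (Fp Fm : Matrix (Fin (n+1)) (Fin (n+1)) ℝ → ℝ)
    (fp fm g u : E n → ℝ) : Prop :=
  SupIn Fp (wflat n a) fp (BpR n r) u ∧ SupIn Fm (wflat n a) fm (BmR n r) u ∧
  TransSup (BpR n r) (BmR n r) (TR n r) (fun _ => ed n) g u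

/-- Viscosity solution of the flat transmission problem on B_r. -/
def FlatSol (r a : ℝ) (Fp Fm : Matrix (Fin (n+1)) (Fin (n+1)) ℝ → ℝ)
    (fp fm g u : E n → ℝ) : Prop :=
  FlatSub r a Fp Fm fp fm g u ∧ FlatSup r a Fp Fm fp fm g u

/-- Sup norm over a set. -/
def supN (s : Set (E n)) (u : E n → ℝ) : ℝ := sSup ((fun x => |u x|) '' s)

/-- Sup norm over a set of the horizontal space. -/
def supN' (s : Set (E' n)) (u : E' n → ℝ) : ℝ := sSup ((fun x => |u x|) '' s)

/-- Weighted L^p norm ‖f·ω⁻¹‖_{L^p(s)}. -/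
def lpwN (p : ℝ) (ω : E n → ℝ) (s : Set (E n)) (f : E n → ℝ) : ℝ :=
  (eLpNorm (fun x => f x / ω x) (ENNReal.ofReal p) (volume.restrict s)).toReal

/-- Hölder seminorm of exponent α on a set. -/
def holderSemi (α : ℝ) (s : Set (E n)) (g : E n → ℝ) : ℝ :=
  sSup {c | ∃ x ∈ s, ∃ y ∈ s, x ≠ y ∧ c = |g x - g y| / ‖x - y‖ ^ α}

/-- Hölder norm ‖g‖_{C^α(s)}. -/
def holderN (α : ℝ) (s : Set (E n)) (g : E n → ℝ) : ℝ := supN s g + holderSemi α s g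

/-- Hölder seminorm of DΨ of exponent α on a subset of the horizontal space. -/
def grad1Semi (α : ℝ) (s : Set (E' n)) (Ψ : E' n → ℝ) : ℝ :=
  sSup {c | ∃ x ∈ s, ∃ y ∈ s, x ≠ y ∧ c = ‖fderiv ℝ Ψ x - fderiv ℝ Ψ y‖ / ‖x - y‖ ^ α}

/-- C^{1,α} norm of Ψ on a set. -/
def c1aN (α : ℝ) (s : Set (E' n)) (Ψ : E' n → ℝ) : ℝ :=
  supN' s Ψ + sSup ((fun x => ‖fderiv ℝ Ψ x‖) '' s) + grad1Semi α s Ψ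

/-- Modulus of continuity of h on a set. -/
def modOn (s : Set (E n)) (h : E n → ℝ) (t : ℝ) : ℝ :=
  sSup {c | ∃ x ∈ s, ∃ y ∈ s, dist x y ≤ t ∧ c = |h x - h y|}

/-- Membership in C^α(s). -/
def HolderMemOn (α : ℝ) (s : Set (E n)) (g : E n → ℝ) : Prop :=
  ∃ C, ∀ x ∈ s, ∀ y ∈ s, |g x - g y| ≤ C * ‖x - y‖ ^ α

/-- Membership in C^{1,α}(s) (as the restriction of a globally C¹ function). -/
def MemC1a (α : ℝ) (s : Set (E' n)) (Ψ : E' n → ℝ) : Prop :=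
  ContDiff ℝ 1 Ψ ∧ ∃ C, ∀ x ∈ s, ∀ y ∈ s, ‖fderiv ℝ Ψ x - fderiv ℝ Ψ y‖ ≤ C * ‖x - y‖ ^ α

/-- Boundedness on a set. -/
def BddOnSet (s : Set (E n)) (f : E n → ℝ) : Prop := ∃ K, ∀ x ∈ s, |f x| ≤ K

/-- The standing assumptions 2.2 of the paper (with p the summability exponent). -/
def Standing (lam Lam α₀ abar p : ℝ) (Fp Fm : Matrix (Fin (n+1)) (Fin (n+1)) ℝ → ℝ)
    (a : E n → ℝ) (Ψ : E' n → ℝ) (fp fm g : E n → ℝ) : Prop :=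
  UniformlyElliptic lam Lam Fp ∧ UniformlyElliptic lam Lam Fm ∧
  ContinuousOn a (closedBall (0 : E n) 1) ∧
  (∀ x ∈ closedBall (0 : E n) 1, 0 ≤ a x) ∧
  IsGreatest (a '' closedBall (0 : E n) 1) abar ∧ abar < 1 ∧
  Tendsto (fun t : ℝ => Real.log (1/t) * modOn (closedBall (0 : E n) 1) a t)
    (nhdsWithin 0 (Set.Ioi 0)) (nhds 0) ∧
  ContinuousOn fp (OmP Ψ) ∧ ContinuousOn fm (OmM Ψ) ∧
  BddOnSet (OmP Ψ) fp ∧ BddOnSet (OmM Ψ) fm ∧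
  MemLp (fun x => fp x / wgt Ψ a x) (ENNReal.ofReal p) (volume.restrict (OmP Ψ)) ∧
  MemLp (fun x => fm x / wgt Ψ a x) (ENNReal.ofReal p) (volume.restrict (OmM Ψ)) ∧
  HolderMemOn α₀ (Gam Ψ) g ∧
  (∃ K : Set (E n), IsCompact K ∧ K ⊆ Gam Ψ ∧ ∀ x ∈ Gam Ψ, x ∉ K → g x = 0) ∧
  MemC1a α₀ (closedBall (0 : E' n) 1) Ψ

/-- Upper ε-envelope of u in the x'-direction, relative to closure(B_ρ). -/
def upperEnv {n : ℕ} (ρ ε : ℝ) (u : E n → ℝ) (y : E n) : ℝ :=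
  sSup {c | ∃ x : E n, x ∈ closedBall (0 : E n) ρ ∧ lst x = lst y ∧
    c = u x - ‖hd x - hd y‖ ^ 2 / ε}

section Translation

variable {𝕜 : Type*} [NontriviallyNormedField 𝕜]
  {V W : Type*} [NormedAddCommGroup V] [NormedSpace 𝕜 V] [NormedAddCommGroup W] [NormedSpace 𝕜 W]

theorem iteratedFDeriv_succ_add_const (k : ℕ) (f : V → W) (c : W) :
    iteratedFDeriv 𝕜 (k + 1) (fun y => f y + c) = iteratedFDeriv 𝕜 (k + 1) f := by
  ext1 x
  simp only [iteratedFDeriv_succ_eq_comp_right, fderiv_add_const]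

theorem ContDiffOn.comp_sub_add_const {k : WithTop ℕ∞} {f : V → W} {s t : Set V} {v : V}
    (hf : ContDiffOn 𝕜 k f s) (hts : MapsTo (· - v) t s) (c : W) :
    ContDiffOn 𝕜 k (fun x => f (x - v) + c) t :=
  (hf.comp (contDiffOn_id.sub contDiffOn_const) hts).add contDiffOn_const

end Translation

theorem sub_mem_ball_of_mem_ball_add {V : Type*} [SeminormedAddCommGroup V] {y v x : V}
    {δ r : ℝ} (hx : x ∈ ball (y + v) (min δ (r - ‖y‖))) : x - v ∈ ball y δ ∩ ball 0 r := by
  have hxv : x - v ∈ ball y (min δ (r - ‖y‖)) := by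
    rwa [mem_ball, ← dist_add_right _ _ v, sub_add_cancel]
  refine ⟨ball_subset_ball (min_le_left _ _) hxv, ball_subset_ball' ?_ hxv⟩
  rw [dist_zero_right]
  linarith [min_le_right δ (r - ‖y‖)]

theorem hess_comp_sub_add_const (φ : E n → ℝ) (v : E n) (c : ℝ) (x : E n) :
    hess (fun y => φ (y - v) + c) x = hess φ (x - v) := by
  ext i j
  simp only [hess, iteratedFDeriv_succ_add_const 1 (fun y => φ (y - v)) c,
    iteratedFDeriv_comp_sub]

theorem lst_add (x y : E n) : lst (x + y) = lst x + lst y := rfl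

theorem lst_sub (x y : E n) : lst (x - y) = lst x - lst y := rfl

theorem hd_sub (x y : E n) : hd (x - y) = hd x - hd y := rfl

theorem continuous_hd : Continuous (hd : E n → E' n) :=
  (PiLp.continuous_toLp _ _).comp
    (continuous_pi fun _ => (continuous_apply _).comp (PiLp.continuous_ofLp _ _))

theorem continuous_lst : Continuous (lst : E n → ℝ) :=
  (continuous_apply _).comp (PiLp.continuous_ofLp _ _)

theorem norm_hd_of_lst_eq_zero {v : E n} (hv : lst v = 0) : ‖hd v‖ = ‖v‖ := by
  rw [EuclideanSpace.norm_eq, EuclideanSpace.norm_eq, Fin.sum_univ_castSucc]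
  have hv' : v.ofLp (Fin.last n) = 0 := hv
  simp [hd, hv']

theorem wflat_add_of_lst_eq_zero (a : ℝ) (x : E n) {v : E n} (hv : lst v = 0) :
    wflat n a (x + v) = wflat n a x := by
  rw [wflat, wflat, lst_add, hv, add_zero]

theorem abs_le_supN {s : Set (E n)} {u : E n → ℝ} (hu : BddOnSet s u) {x : E n} (hx : x ∈ s) :
    |u x| ≤ supN s u := by
  obtain ⟨K, hK⟩ := hu
  exact le_csSup ⟨K, by rintro _ ⟨z, hz, rfl⟩; exact hK z hz⟩ ⟨x, hx, rfl⟩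

theorem sub_le_modOn {s : Set (E n)} {f : E n → ℝ} (hf : BddOnSet s f) {x y : E n}
    (hx : x ∈ s) (hy : y ∈ s) {t : ℝ} (hxy : dist x y ≤ t) : f x - f y ≤ modOn s f t := by
  obtain ⟨C, hC⟩ := hf
  refine (le_abs_self _).trans (le_csSup ⟨2 * C, ?_⟩ ⟨x, hx, y, hy, hxy, rfl⟩)
  rintro _ ⟨x', hx', y', hy', -, rfl⟩
  linarith [abs_sub (f x') (f y'), hC x' hx', hC y' hy']

section Envelope

variable {ρ ε : ℝ} {u : E n → ℝ}

theorem exists_upperEnv_eq (hρ : ρ < 1) (hu : UpperSemicontinuousOn u (ball 0 1)) {y : E n}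
    (hy : y ∈ closedBall (0 : E n) ρ) :
    ∃ x ∈ closedBall (0 : E n) ρ, lst x = lst y ∧
      upperEnv ρ ε u y = u x - ‖hd x - hd y‖ ^ 2 / ε ∧
      ∀ z ∈ closedBall (0 : E n) ρ, lst z = lst y →
        u z - ‖hd z - hd y‖ ^ 2 / ε ≤ u x - ‖hd x - hd y‖ ^ 2 / ε := by
  set S : Set (E n) := closedBall 0 ρ ∩ {x | lst x = lst y}
  have hS : IsCompact S :=
    (isCompact_closedBall _ _).inter_right (isClosed_eq continuous_lst continuous_const)
  have husc : UpperSemicontinuousOn (fun x => u x - ‖hd x - hd y‖ ^ 2 / ε) S := by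
    simp only [sub_eq_add_neg]
    refine (hu.mono ((inter_subset_left).trans (closedBall_subset_ball hρ))).add
      (Continuous.continuousOn ?_).upperSemicontinuousOn
    have := continuous_hd (n := n)
    fun_prop
  obtain ⟨x, ⟨hxρ, hxy⟩, hmax⟩ := husc.exists_isMaxOn (⟨y, hy, rfl⟩ : S.Nonempty) hS
  refine ⟨x, hxρ, hxy, IsGreatest.csSup_eq ⟨⟨x, hxρ, hxy, rfl⟩, ?_⟩,
    fun z hz hzy => hmax ⟨hz, hzy⟩⟩
  rintro _ ⟨z, hz, hzy, rfl⟩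
  exact hmax ⟨hz, hzy⟩

theorem le_upperEnv (hρ : ρ < 1) (hu : UpperSemicontinuousOn u (ball 0 1)) {x y : E n}
    (hx : x ∈ closedBall (0 : E n) ρ) (hy : y ∈ closedBall (0 : E n) ρ) (hxy : lst x = lst y) :
    u x - ‖hd x - hd y‖ ^ 2 / ε ≤ upperEnv ρ ε u y := by
  obtain ⟨z, -, -, heq, hmax⟩ := exists_upperEnv_eq (ε := ε) hρ hu hy
  exact heq ▸ hmax x hx hxy

theorem exists_upperEnv_shift (hρ : ρ < 1) (hε : 0 < ε) (hu : UpperSemicontinuousOn u (ball 0 1))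
    {K : ℝ} (hK : ∀ x ∈ ball (0 : E n) 1, |u x| ≤ K) {y : E n} (hy : y ∈ closedBall (0 : E n) ρ) :
    ∃ v : E n, lst v = 0 ∧ ‖v‖ ≤ √(2 * ε * K) ∧ ∃ c, u (y + v) = upperEnv ρ ε u y + c ∧
      ∀ x ∈ closedBall (0 : E n) ρ, x - v ∈ closedBall (0 : E n) ρ →
        u x ≤ upperEnv ρ ε u (x - v) + c := by
  obtain ⟨x, hxρ, hxy, heq, hmax⟩ := exists_upperEnv_eq (ε := ε) hρ hu hy
  have hv : lst (x - y) = 0 := by rw [lst_sub, hxy, sub_self]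
  refine ⟨x - y, hv, ?_, ‖hd (x - y)‖ ^ 2 / ε, by rw [add_sub_cancel, heq, hd_sub]; ring,
    fun z hz hzv => ?_⟩
  · have hcomp := hmax y hy rfl
    have hx1 := abs_le.mp (hK x (closedBall_subset_ball hρ hxρ))
    have hy1 := abs_le.mp (hK y (closedBall_subset_ball hρ hy))
    have hc : ‖hd (x - y)‖ ^ 2 / ε ≤ 2 * K := by
      rw [sub_self, norm_zero, zero_pow two_ne_zero, zero_div, sub_zero, ← hd_sub] at hcomp
      linarith
    rw [← norm_hd_of_lst_eq_zero hv, ← abs_norm]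
    exact Real.abs_le_sqrt (by rw [div_le_iff₀ hε] at hc; linarith)
  · have := le_upperEnv (ε := ε) hρ hu hz hzv (by rw [lst_sub, hv, sub_zero])
    rw [← hd_sub, sub_sub_cancel] at this
    linarith

end Envelope

section Shift

variable {ρ r c : ℝ} {u w : E n → ℝ} {y v : E n}

theorem sub_mem_sep_ball (hv : lst v = 0) {P : ℝ → Prop} {R : ℝ} {x : E n}
    (hx : x ∈ {z ∈ ball (0 : E n) R | P (lst z)}) (hxv : x - v ∈ ball (0 : E n) r) :
    x - v ∈ {z ∈ ball (0 : E n) r | P (lst z)} :=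
  ⟨hxv, by rw [lst_sub, hv, sub_zero]; exact hx.2⟩

theorem le_comp_sub_add_of_le (hrρ : r + ‖v‖ ≤ ρ)
    (hshift : ∀ x ∈ closedBall (0 : E n) ρ, x - v ∈ closedBall (0 : E n) ρ → u x ≤ w (x - v) + c)
    {S S' : Set (E n)} {δ : ℝ} {φ : E n → ℝ}
    (hS : ∀ x ∈ S', x - v ∈ ball 0 r → x - v ∈ S) (hφ : ∀ z ∈ ball y δ ∩ S, w z ≤ φ z) :
    ∀ x ∈ ball (y + v) (min δ (r - ‖y‖)) ∩ S', u x ≤ φ (x - v) + c := by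
  rintro x ⟨hx, hxS⟩
  obtain ⟨hxy, hxr⟩ := sub_mem_ball_of_mem_ball_add hx
  have hxρ : x ∈ closedBall (0 : E n) ρ := by
    rw [mem_ball_zero_iff] at hxr
    rw [mem_closedBall_zero_iff]
    linarith [norm_sub_norm_le x v]
  have hxvρ : x - v ∈ closedBall (0 : E n) ρ :=
    ball_subset_closedBall.trans (closedBall_subset_closedBall (by linarith [norm_nonneg v]))
      hxr
  linarith [hshift x hxρ hxvρ, hφ (x - v) ⟨hxy, hS x hxS hxr⟩]

theorem TouchAbove.shift (hv : lst v = 0) (hrρ : r + ‖v‖ ≤ ρ) (hy : u (y + v) = w y + c)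
    (hshift : ∀ x ∈ closedBall (0 : E n) ρ, x - v ∈ closedBall (0 : E n) ρ → u x ≤ w (x - v) + c)
    {P : ℝ → Prop} {R δ : ℝ} {φ : E n → ℝ}
    (h : TouchAbove w φ {x ∈ ball (0 : E n) r | P (lst x)} y δ) :
    TouchAbove u (fun x => φ (x - v) + c) {x ∈ ball (0 : E n) R | P (lst x)} (y + v)
      (min δ (r - ‖y‖)) :=
  ⟨by simp only [add_sub_cancel_right, h.1, hy],
    le_comp_sub_add_of_le hrρ hshift (fun _ hx => sub_mem_sep_ball hv hx) h.2⟩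

theorem TransTestAbove.shift (hv : lst v = 0) (hrρ : r + ‖v‖ ≤ ρ) (hy : u (y + v) = w y + c)
    (hshift : ∀ x ∈ closedBall (0 : E n) ρ, x - v ∈ closedBall (0 : E n) ρ → u x ≤ w (x - v) + c)
    {R δ : ℝ} {φp φm : E n → ℝ}
    (h : TransTestAbove w φp φm (BpR n r) (BmR n r) (TR n r) y δ) :
    TransTestAbove u (fun x => φp (x - v) + c) (fun x => φm (x - v) + c)
      (BpR n R) (BmR n R) (TR n R) (y + v) (min δ (r - ‖y‖)) := by
  obtain ⟨hp, hm, hglue, hpy, hlep, hlem⟩ := h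
  have hmaps : MapsTo (· - v) (ball (y + v) (min δ (r - ‖y‖))) (ball y δ) :=
    fun x hx => (sub_mem_ball_of_mem_ball_add hx).1
  have hside : ∀ (P : ℝ → Prop) (x : E n),
      x ∈ {z ∈ ball (0 : E n) R | P (lst z)} ∪ TR n R → x - v ∈ ball 0 r →
        x - v ∈ {z ∈ ball (0 : E n) r | P (lst z)} ∪ TR n r :=
    fun _ _ hx hxr =>
      hx.imp (sub_mem_sep_ball hv · hxr) (sub_mem_sep_ball (P := (· = 0)) hv · hxr)
  refine ⟨hp.comp_sub_add_const hmaps c, hm.comp_sub_add_const hmaps c, fun x ⟨hx, hxT⟩ => ?_,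
    by simp only [add_sub_cancel_right, hpy, hy],
    le_comp_sub_add_of_le hrρ hshift (hside (0 < ·)) hlep,
    le_comp_sub_add_of_le hrρ hshift (hside (· < 0)) hlem⟩
  have hxv := sub_mem_ball_of_mem_ball_add hx
  simp only [hglue (x - v) ⟨hxv.1, sub_mem_sep_ball (P := (· = 0)) hv hxT hxv.2⟩]

end Shift

section Subsolution

variable {a ρ ε r K : ℝ} {u : E n → ℝ}

theorem subIn_upperEnv {F : Matrix (Fin (n+1)) (Fin (n+1)) ℝ → ℝ} {P : ℝ → Prop} {f : E n → ℝ}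
    (hρ : ρ < 1) (hε : 0 < ε) (hrρ : r + √(2 * ε * K) ≤ ρ)
    (hu : UpperSemicontinuousOn u (ball 0 1)) (hK : ∀ x ∈ ball (0 : E n) 1, |u x| ≤ K)
    (hf : BddOnSet {x ∈ ball (0 : E n) 1 | P (lst x)} f)
    (hsub : SubIn F (wflat n a) f {x ∈ ball (0 : E n) 1 | P (lst x)} u) :
    SubIn F (wflat n a) (fun x => f x - modOn {x ∈ ball (0 : E n) 1 | P (lst x)} f (√(2 * ε * K)))
      {x ∈ ball (0 : E n) r | P (lst x)} (upperEnv ρ ε u) := by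
  intro y ⟨hyr, hyP⟩ φ δ hδ hφ htouch
  have hsqrt := Real.sqrt_nonneg (2 * ε * K)
  rw [mem_ball_zero_iff] at hyr
  obtain ⟨v, hv, hvK, c, hyv, hshift⟩ :=
    exists_upperEnv_shift hρ hε hu hK (mem_closedBall_zero_iff.mpr (by linarith))
  have hyv1 : y + v ∈ {x ∈ ball (0 : E n) 1 | P (lst x)} :=
    ⟨mem_ball_zero_iff.mpr (by linarith [norm_add_le y v]), by rwa [lst_add, hv, add_zero]⟩
  have hmaps : MapsTo (· - v) (ball (y + v) (min δ (r - ‖y‖))) (ball y δ) :=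
    fun x hx => (sub_mem_ball_of_mem_ball_add hx).1
  have key := hsub (y + v) hyv1 _ _ (lt_min hδ (sub_pos.mpr hyr))
    (hφ.comp_sub_add_const hmaps c) (htouch.shift hv (by linarith) hyv hshift)
  rw [hess_comp_sub_add_const, add_sub_cancel_right, wflat_add_of_lst_eq_zero a y hv] at key
  have hosc := sub_le_modOn (t := √(2 * ε * K)) hf
    ⟨mem_ball_zero_iff.mpr (by linarith), hyP⟩ hyv1
    (by rw [dist_self_add_right]; exact hvK)
  dsimp only
  linarith

theorem transSub_upperEnv {g : E n → ℝ} (e : E n)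
    (hρ : ρ < 1) (hε : 0 < ε) (hrρ : r + √(2 * ε * K) ≤ ρ)
    (hu : UpperSemicontinuousOn u (ball 0 1)) (hK : ∀ x ∈ ball (0 : E n) 1, |u x| ≤ K)
    (hg : BddOnSet (TR n 1) g) (hsub : TransSub (BpR n 1) (BmR n 1) (TR n 1) (fun _ => e) g u) :
    TransSub (BpR n r) (BmR n r) (TR n r) (fun _ => e)
      (fun x => g x - modOn (TR n 1) g (√(2 * ε * K))) (upperEnv ρ ε u) := by
  intro y ⟨hyr, hy0⟩ φp φm δ hδ htest
  have hsqrt := Real.sqrt_nonneg (2 * ε * K)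
  rw [mem_ball_zero_iff] at hyr
  obtain ⟨v, hv, hvK, c, hyv, hshift⟩ :=
    exists_upperEnv_shift hρ hε hu hK (mem_closedBall_zero_iff.mpr (by linarith))
  have hyv1 : y + v ∈ TR n 1 :=
    ⟨mem_ball_zero_iff.mpr (by linarith [norm_add_le y v]), by rwa [lst_add, hv, add_zero]⟩
  have key := hsub (y + v) hyv1 _ _ _ (lt_min hδ (sub_pos.mpr hyr))
    (htest.shift hv (by linarith) hyv hshift)
  simp only [fderiv_add_const, fderiv_comp_sub, add_sub_cancel_right] at key
  have hosc := sub_le_modOn (t := √(2 * ε * K)) hg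
    ⟨mem_ball_zero_iff.mpr (by linarith), hy0⟩ hyv1
    (by rw [dist_self_add_right]; exact hvK)
  dsimp only
  linarith

end Subsolution

theorem upper_envelope_subsolution_general
    (n : ℕ)
    (Fp Fm : Matrix (Fin (n+1)) (Fin (n+1)) ℝ → ℝ)
    (a : ℝ)
    (fp fm g u : E n → ℝ)
    (hfpb : BddOnSet (BpR n 1) fp) (hfmb : BddOnSet (BmR n 1) fm)
    (hgb : BddOnSet (TR n 1) g)
    (hu : UpperSemicontinuousOn u (ball (0 : E n) 1))
    (hub : BddOnSet (ball (0 : E n) 1) u)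
    (hsub : FlatSub 1 a Fp Fm fp fm g u)
    (ρ : ℝ) (hρ1 : ρ < 1) :
    ∃ ε₀ > (0 : ℝ), ∀ ε : ℝ, 0 < ε → ε ≤ ε₀ →
      ∀ r : ℝ, 0 < r → r ≤ ρ - Real.sqrt (2 * ε * supN (ball (0 : E n) 1) u) →
        FlatSub r a Fp Fm
          (fun x => fp x -
            modOn (BpR n 1) fp (Real.sqrt (2 * ε * supN (ball (0 : E n) 1) u)))
          (fun x => fm x -
            modOn (BmR n 1) fm (Real.sqrt (2 * ε * supN (ball (0 : E n) 1) u)))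
          (fun x => g x -
            modOn (TR n 1) g (Real.sqrt (2 * ε * supN (ball (0 : E n) 1) u)))
          (upperEnv ρ ε u) := by
  have hK := fun x (hx : x ∈ ball (0 : E n) 1) => abs_le_supN hub hx
  refine ⟨1, one_pos, fun ε hε _ r _ hrρ => ?_⟩
  have hrρ' : r + √(2 * ε * supN (ball (0 : E n) 1) u) ≤ ρ := by linarith
  exact ⟨subIn_upperEnv hρ1 hε hrρ' hu hK hfpb hsub.1,
    subIn_upperEnv (P := (· < 0)) hρ1 hε hrρ' hu hK hfmb hsub.2.1,
    transSub_upperEnv _ hρ1 hε hrρ' hu hK hgb hsub.2.2⟩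

/-- the upper ε-envelope of a viscosity subsolution of the flat
    transmission problem is a viscosity subsolution with slightly worse data. -/
theorem upper_envelope_subsolution
    (n : ℕ) (hn : 1 ≤ n) (lam Lam : ℝ) (hlam : 0 < lam) (hlL : lam ≤ Lam)
    (Fp Fm : Matrix (Fin (n+1)) (Fin (n+1)) ℝ → ℝ)
    (hFp : UniformlyElliptic lam Lam Fp) (hFm : UniformlyElliptic lam Lam Fm)
    (a : ℝ) (ha0 : 0 < a) (ha1 : a < 1)
    (fp fm g u : E n → ℝ)
    (hfp : UniformContinuousOn fp (BpR n 1)) (hfm : UniformContinuousOn fm (BmR n 1))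
    (hfpb : BddOnSet (BpR n 1) fp) (hfmb : BddOnSet (BmR n 1) fm)
    (hg : UniformContinuousOn g (TR n 1)) (hgb : BddOnSet (TR n 1) g)
    (hu : UpperSemicontinuousOn u (ball (0 : E n) 1))
    (hub : BddOnSet (ball (0 : E n) 1) u)
    (hsub : FlatSub 1 a Fp Fm fp fm g u)
    (ρ : ℝ) (hρ0 : 0 < ρ) (hρ1 : ρ < 1) :
    ∃ ε₀ > (0 : ℝ), ∀ ε : ℝ, 0 < ε → ε ≤ ε₀ →
      ∀ r : ℝ, 0 < r → r ≤ ρ - Real.sqrt (2 * ε * supN (ball (0 : E n) 1) u) →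
        FlatSub r a Fp Fm
          (fun x => fp x -
            modOn (BpR n 1) fp (Real.sqrt (2 * ε * supN (ball (0 : E n) 1) u)))
          (fun x => fm x -
            modOn (BmR n 1) fm (Real.sqrt (2 * ε * supN (ball (0 : E n) 1) u)))
          (fun x => g x -
            modOn (TR n 1) g (Real.sqrt (2 * ε * supN (ball (0 : E n) 1) u)))
          (upperEnv ρ ε u) :=
  upper_envelope_subsolution_general n Fp Fm a fp fm g u hfpb hfmb hgb hu hub hsub ρ hρ1
end
end
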